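/- Let d ≥ 2, let x, y ∈ ℂ^d be unit vectors, let {W_{i,j} : 0 ≤ i, j ≤ d−1} be the discrete Weyl matrices, and define Φ : M_d(ℂ) → M_d(ℂ) by Φ(X) = Σ_{i,j=0}^{d−1} (W_{i,j} x)(W_{i,j} y)* X (W_{i,j} y)(W_{i,j} x)*. Then for every 0 ≤ k ≤ d−1 the matrix Φ(E_{k,k}) is diagonal, and for every k ≠ l all diagonal entries of Φ(E_{k,l}) are zero. -/

import Mathlib

open Matrix

/-- The cyclic shift matrix `U` on `ℂ^d`, sending `e_k` to `e_{k+1 (mod d)}`. -/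
noncomputable def weylU (d : ℕ) : Matrix (Fin d) (Fin d) ℂ :=
  fun k l => if (k : ℕ) = ((l : ℕ) + 1) % d then 1 else 0

/-- The diagonal matrix `V = diag(1, ω, ω², ..., ω^{d-1})` where `ω = exp(2πi/d)`. -/
noncomputable def weylV (d : ℕ) : Matrix (Fin d) (Fin d) ℂ :=
  Matrix.diagonal fun k => Complex.exp (2 * Real.pi * Complex.I / d) ^ (k : ℕ)

/-- The discrete Weyl matrices `W_{i,j} = Uⁱ Vʲ`. -/
noncomputable def weylW (d : ℕ) (i j : Fin d) : Matrix (Fin d) (Fin d) ℂ :=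
  weylU d ^ (i : ℕ) * weylV d ^ (j : ℕ)

/-- The rank-one matrix `x y*` with entries `(x y*)_{k,l} = x_k * conj (y_l)`. -/
noncomputable def outer {d : ℕ} (x y : Fin d → ℂ) : Matrix (Fin d) (Fin d) ℂ :=
  fun k l => x k * (starRingEnd ℂ) (y l)

/-!
The `m`-th coordinate of `W_{i,j} v` is `ω^{j(m-i)} v_{m-i}`, so the `(m, n)` entry of the
`(i, j)` summand of `Φ(E_{k,l})` is `r_i^j` times a factor independent of `j`, where
`r_i = ω^{(m-i)+(l-i)-(k-i)-(n-i)}` is a `d`-th root of unity. Unless `m + l = k + n` in `ℤ/d`,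
`r_i ≠ 1` and the geometric sum over `j` vanishes. For `k = l` the condition `m + l = k + n`
forces `m = n`, and for `m = n` it forces `k = l`.
-/

noncomputable def weylOmega (d : ℕ) : ℂ :=
  Complex.exp (2 * Real.pi * Complex.I / d)

lemma isPrimitiveRoot_weylOmega (d : ℕ) [NeZero d] : IsPrimitiveRoot (weylOmega d) d :=
  Complex.isPrimitiveRoot_exp d (NeZero.ne d)

lemma conj_weylOmega_pow (d : ℕ) [NeZero d] (a : ℕ) :
    starRingEnd ℂ (weylOmega d ^ a) = (weylOmega d ^ a)⁻¹ := by
  refine (Complex.inv_eq_conj ?_).symm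
  rw [norm_pow, (isPrimitiveRoot_weylOmega d).norm'_eq_one (NeZero.ne d), one_pow]

lemma sum_fin_pow_eq_zero {K : Type*} [DivisionRing K] {d : ℕ} {r : K} (hrd : r ^ d = 1)
    (hr : r ≠ 1) : ∑ j : Fin d, r ^ (j : ℕ) = 0 := by
  rw [Fin.sum_univ_eq_sum_range (r ^ ·), geom_sum_eq hr, hrd, sub_self, zero_div]

lemma outer_mul_single_mul_outer_apply {d : ℕ} (a b c e : Fin d → ℂ) (k l m n : Fin d) :
    (outer a b * single k l (1 : ℂ) * outer c e) m n
      = a m * starRingEnd ℂ (b k) * (c l * starRingEnd ℂ (e n)) := by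
  simp [Matrix.mul_apply, outer, Matrix.single, ite_and, mul_ite, ite_mul, mul_assoc]

lemma weylV_pow_mulVec_apply {d : ℕ} (j : ℕ) (v : Fin d → ℂ) (m : Fin d) :
    (weylV d ^ j *ᵥ v) m = weylOmega d ^ ((m : ℕ) * j) * v m := by
  rw [weylV, diagonal_pow, mulVec_diagonal, Pi.pow_apply, ← pow_mul, weylOmega]

section mulVec

variable {d : ℕ} [NeZero d]

lemma weylU_mulVec_apply (v : Fin d → ℂ) (m : Fin d) : (weylU d *ᵥ v) m = v (m - 1) := by
  have hcond (l : Fin d) : (m : ℕ) = ((l : ℕ) + 1) % d ↔ l = m - 1 := by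
    rw [eq_sub_iff_add_eq, Fin.ext_iff, Fin.val_add, Fin.val_one', Nat.add_mod_mod, eq_comm]
  simp [Matrix.mulVec, dotProduct, weylU, hcond]

open Fin.NatCast in
lemma weylU_pow_mulVec_apply (i : ℕ) (v : Fin d → ℂ) (m : Fin d) :
    (weylU d ^ i *ᵥ v) m = v (m - i) := by
  induction i generalizing m with
  | zero => simp
  | succ i ih =>
    rw [pow_succ', ← mulVec_mulVec, weylU_mulVec_apply, ih]
    congr 1
    push_cast
    abel

lemma weylW_mulVec_apply (i j : Fin d) (v : Fin d → ℂ) (m : Fin d) :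
    (weylW d i j *ᵥ v) m = weylOmega d ^ ((m - i : Fin d) * (j : ℕ)) * v (m - i) := by
  rw [weylW, ← mulVec_mulVec, weylU_pow_mulVec_apply, Fin.cast_val_eq_self,
    weylV_pow_mulVec_apply]

end mulVec

section entries

variable {d : ℕ} [NeZero d]

lemma weylOmega_pow_eq_pow_iff (a b : ℕ) :
    weylOmega d ^ a = weylOmega d ^ b ↔ a % d = b % d := by
  have hω := isPrimitiveRoot_weylOmega d
  rw [(hω.isOfFinOrder (NeZero.ne d)).pow_inj_mod, ← hω.eq_orderOf]

lemma weyl_summand_apply (x y : Fin d → ℂ) (i j k l m n : Fin d) :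
    (outer (weylW d i j *ᵥ x) (weylW d i j *ᵥ y) * single k l (1 : ℂ) *
        outer (weylW d i j *ᵥ y) (weylW d i j *ᵥ x)) m n
      = (weylOmega d ^ ((m - i : Fin d) + (l - i : Fin d) : ℕ) *
          (weylOmega d ^ ((k - i : Fin d) + (n - i : Fin d) : ℕ))⁻¹) ^ (j : ℕ) *
        (x (m - i) * starRingEnd ℂ (y (k - i)) * (y (l - i) * starRingEnd ℂ (x (n - i)))) := by
  rw [outer_mul_single_mul_outer_apply]
  simp only [weylW_mulVec_apply, map_mul, conj_weylOmega_pow]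
  rw [mul_pow, inv_pow, ← pow_mul, ← pow_mul, add_mul, add_mul, pow_add, pow_add, mul_inv]
  ring

lemma weyl_sum_apply_eq_zero (x y : Fin d → ℂ) {k l m n : Fin d} (h : m + l ≠ k + n) :
    (∑ i : Fin d, ∑ j : Fin d,
        outer (weylW d i j *ᵥ x) (weylW d i j *ᵥ y) * single k l (1 : ℂ) *
          outer (weylW d i j *ᵥ y) (weylW d i j *ᵥ x)) m n = 0 := by
  have hω := isPrimitiveRoot_weylOmega d
  simp only [Matrix.sum_apply, weyl_summand_apply, ← Finset.sum_mul]
  refine Finset.sum_eq_zero fun i _ => mul_eq_zero_of_left (sum_fin_pow_eq_zero ?_ ?_) _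
  · rw [mul_pow, inv_pow, ← pow_mul, ← pow_mul, pow_mul', pow_mul',
      hω.pow_eq_one, one_pow, one_pow, inv_one, mul_one]
  · rw [Ne, mul_inv_eq_one₀ (pow_ne_zero _ (hω.ne_zero (NeZero.ne d))),
      weylOmega_pow_eq_pow_iff]
    refine fun hmod => h ?_
    have : (m - i) + (l - i) = (k - i) + (n - i) := Fin.ext hmod
    rwa [sub_add_sub_comm, sub_add_sub_comm, sub_left_inj] at this

end entries

theorem weyl_covariant_channel_diag_general {d : ℕ}
    (x y : EuclideanSpace ℂ (Fin d)) :
    (∀ k : Fin d,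
      (∑ i : Fin d, ∑ j : Fin d,
          outer ((weylW d i j).mulVec x) ((weylW d i j).mulVec y) *
            Matrix.single k k (1 : ℂ) *
            outer ((weylW d i j).mulVec y) ((weylW d i j).mulVec x)).IsDiag) ∧
    (∀ k l : Fin d, k ≠ l → ∀ m : Fin d,
      (∑ i : Fin d, ∑ j : Fin d,
          outer ((weylW d i j).mulVec x) ((weylW d i j).mulVec y) *
            Matrix.single k l (1 : ℂ) *
            outer ((weylW d i j).mulVec y) ((weylW d i j).mulVec x)) m m = 0) := by
  rcases eq_zero_or_neZero d with rfl | _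
  · exact ⟨fun k => k.elim0, fun k => k.elim0⟩
  refine ⟨fun k m n hmn => weyl_sum_apply_eq_zero _ _ ?_,
    fun k l hkl m => weyl_sum_apply_eq_zero _ _ ?_⟩
  · rwa [add_comm k, Ne, add_left_inj]
  · rwa [add_comm k, Ne, add_right_inj, eq_comm]

/-- Let `x, y ∈ ℂ^d` be unit vectors and define
`Φ(X) = ∑_{i,j} (W_{i,j} x)(W_{i,j} y)* X (W_{i,j} y)(W_{i,j} x)*`. Then `Φ(E_{k,k})` is a
diagonal matrix for every `k`, and for `k ≠ l` all diagonal entries of `Φ(E_{k,l})` vanish. -/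
theorem weyl_covariant_channel_diag {d : ℕ} (hd : 2 ≤ d)
    (x y : EuclideanSpace ℂ (Fin d)) (hx : ‖x‖ = 1) (hy : ‖y‖ = 1) :
    (∀ k : Fin d,
      (∑ i : Fin d, ∑ j : Fin d,
          outer ((weylW d i j).mulVec x) ((weylW d i j).mulVec y) *
            Matrix.single k k (1 : ℂ) *
            outer ((weylW d i j).mulVec y) ((weylW d i j).mulVec x)).IsDiag) ∧
    (∀ k l : Fin d, k ≠ l → ∀ m : Fin d,
      (∑ i : Fin d, ∑ j : Fin d,
          outer ((weylW d i j).mulVec x) ((weylW d i j).mulVec y) *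
            Matrix.single k l (1 : ℂ) *
            outer ((weylW d i j).mulVec y) ((weylW d i j).mulVec x)) m m = 0) :=
  weyl_covariant_channel_diag_general x y
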